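/- The conformal transformation is reversible: if (X,d) is a length space, w: X → ℝ is bounded continuous, and d' is the conformal metric with factor e^w (infimum of e^w-weighted lengths of d-absolutely continuous curves), then applying the conformal construction to (X,d') with factor e^{-w} recovers d restricted to its length structure; i.e., the e^{-w}-weighted length of any absolutely continuous curve γ in (X,d') equals its d-length, so the conformal metric of (X,d') with weight -w equals the length metric of d. -/

import Mathlib

open Filter MeasureTheory
open scoped Topology

/-- An absolutely continuous curve `γ : [0,1] → X` (w.r.t. a distance function `d`)
bundled with its metric speed `|γ̇_t| = lim_{h→0} d(γ(t+h), γ t)/|h|`. -/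
structure ACWithSpeed (X : Type*) (d : X → X → ℝ) where
  toFun : ℝ → X
  speed : ℝ → ℝ
  speed_nonneg : ∀ t, 0 ≤ speed t
  integrable : IntervalIntegrable speed volume 0 1
  speed_ae : ∀ᵐ t ∂(volume.restrict (Set.Ioo (0:ℝ) 1)),
    Filter.Tendsto (fun h : ℝ => d (toFun (t + h)) (toFun t) / |h|) (𝓝[≠] (0:ℝ))
      (𝓝 (speed t))
  dist_le : ∀ a b : ℝ, 0 ≤ a → a ≤ b → b ≤ 1 →
    d (toFun a) (toFun b) ≤ ∫ t in a..b, speed t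

/-- The `e^w`-weighted length of an absolutely continuous curve. -/
noncomputable def wLength {X : Type*} (d : X → X → ℝ) (w : X → ℝ) (c : ACWithSpeed X d) : ℝ :=
  ∫ t in (0:ℝ)..1, c.speed t * Real.exp (w (c.toFun t))

/-- The conformal distance with conformal factor `e^w`: infimum of `e^w`-weighted lengths
of absolutely continuous curves joining the two points. -/
noncomputable def confDist {X : Type*} (d : X → X → ℝ) (w : X → ℝ) (x y : X) : ℝ :=
  sInf { L | ∃ c : ACWithSpeed X d, c.toFun 0 = x ∧ c.toFun 1 = y ∧ L = wLength d w c }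

/-- The intrinsic (length) distance induced by `d`. -/
noncomputable def lengthDist {X : Type*} (d : X → X → ℝ) (x y : X) : ℝ :=
  confDist d (fun _ => 0) x y

/-!
A `d`-absolutely continuous curve is also absolutely continuous for the conformal distance `d'`,
with metric speed multiplied by `e^w`: near a point `z`, `d'` agrees with `e^{w z} d` up to
factors `e^{±ε}`, since the lower bound on `w` keeps `d'`-short paths inside a small ball. So its
`e^{-w}`-weighted `d'`-length is its `d`-length, and the conformal distance of `d'` with weight
`-w` is at most the length distance of `d`. Conversely, cut a `d'`-absolutely continuous curve
into short pieces; as its image is compact, `d ≤ e^{ε - w} d'` holds uniformly on each piece, so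
the `d`-distance of its endpoints is at most `e^{2ε}` times its `e^{-w}`-weighted `d'`-length,
and we let `ε → 0`.
-/

open Set Real

namespace ACWithSpeed

variable {X : Type*} {d : X → X → ℝ}

noncomputable def length (c : ACWithSpeed X d) : ℝ :=
  ∫ t in (0:ℝ)..1, c.speed t

lemma intervalIntegrable_speed (c : ACWithSpeed X d) {u v : ℝ} (hu : u ∈ Icc (0:ℝ) 1)
    (hv : v ∈ Icc (0:ℝ) 1) : IntervalIntegrable c.speed volume u v :=
  c.integrable.mono_set (by rw [uIcc_of_le zero_le_one]; exact uIcc_subset_Icc hu hv)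

lemma le_length (c : ACWithSpeed X d) {s : ℝ} (hs : s ∈ Icc (0:ℝ) 1) :
    d (c.toFun s) (c.toFun 1) ≤ c.length := by
  have hsplit := intervalIntegral.integral_add_adjacent_intervals
    (c.intervalIntegrable_speed (left_mem_Icc.2 zero_le_one) hs)
    (c.intervalIntegrable_speed hs (right_mem_Icc.2 zero_le_one))
  have h0s : 0 ≤ ∫ t in (0:ℝ)..s, c.speed t :=
    intervalIntegral.integral_nonneg hs.1 fun t _ => c.speed_nonneg t
  have := c.dist_le s 1 hs.1 hs.2 le_rfl
  rw [length, ← hsplit]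
  linarith

lemma le_length_zero_one (c : ACWithSpeed X d) : d (c.toFun 0) (c.toFun 1) ≤ c.length :=
  c.le_length (left_mem_Icc.2 zero_le_one)

lemma continuousOn [PseudoMetricSpace X] (c : ACWithSpeed X d) {C : ℝ} (hC : 0 ≤ C)
    (hd : ∀ p q, dist p q ≤ C * d p q) : ContinuousOn c.toFun (Icc 0 1) := by
  set F : ℝ → ℝ := fun s => ∫ t in (0:ℝ)..s, c.speed t
  have hF : ContinuousOn F (Icc 0 1) := by
    have := intervalIntegral.continuousOn_primitive_interval' c.integrable left_mem_uIcc
    rwa [uIcc_of_le zero_le_one] at this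
  have hcF : ∀ a ∈ Icc (0:ℝ) 1, ∀ b ∈ Icc (0:ℝ) 1,
      dist (c.toFun a) (c.toFun b) ≤ C * dist (F a) (F b) := by
    suffices ∀ a ∈ Icc (0:ℝ) 1, ∀ b ∈ Icc (0:ℝ) 1, a ≤ b →
        dist (c.toFun a) (c.toFun b) ≤ C * dist (F a) (F b) by
      intro a ha b hb
      rcases le_total a b with hab | hba
      · exact this a ha b hb hab
      · rw [dist_comm, dist_comm (F a)]; exact this b hb a ha hba
    intro a ha b hb hab
    have hsub := intervalIntegral.integral_interval_sub_left
      (c.intervalIntegrable_speed (left_mem_Icc.2 zero_le_one) hb)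
      (c.intervalIntegrable_speed (left_mem_Icc.2 zero_le_one) ha)
    calc dist (c.toFun a) (c.toFun b) ≤ C * d (c.toFun a) (c.toFun b) := hd _ _
      _ ≤ C * (F b - F a) := by
          gcongr
          simpa only [F, hsub] using c.dist_le a b ha.1 hab hb.2
      _ ≤ C * dist (F a) (F b) := by
          gcongr
          rw [dist_comm, Real.dist_eq]
          exact le_abs_self _
  intro b hb
  rw [ContinuousWithinAt, tendsto_iff_dist_tendsto_zero]
  refine squeeze_zero' (Eventually.of_forall fun _ => dist_nonneg)
    (eventually_nhdsWithin_of_forall fun a ha => hcF a ha b hb) ?_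
  simpa using ((hF b hb).tendsto.dist (tendsto_const_nhds (x := F b))).const_mul C

lemma continuousOn_dist [PseudoMetricSpace X] (c : ACWithSpeed X (fun p q => dist p q)) :
    ContinuousOn c.toFun (Icc 0 1) :=
  c.continuousOn zero_le_one fun _ _ => (one_mul _).ge

lemma intervalIntegrable_speed_mul_exp [TopologicalSpace X] (c : ACWithSpeed X d)
    (hc : ContinuousOn c.toFun (Icc 0 1)) {w : X → ℝ} (hw : Continuous w) {u v : ℝ}
    (hu : u ∈ Icc (0:ℝ) 1) (hv : v ∈ Icc (0:ℝ) 1) :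
    IntervalIntegrable (fun t => c.speed t * exp (w (c.toFun t))) volume u v :=
  (c.intervalIntegrable_speed hu hv).mul_continuousOn
    ((continuous_exp.comp hw).comp_continuousOn (hc.mono (uIcc_subset_Icc hu hv)))

noncomputable def const (x : X) (hx : d x x = 0) : ACWithSpeed X d where
  toFun _ := x
  speed _ := 0
  speed_nonneg _ := le_rfl
  integrable := intervalIntegrable_const
  speed_ae := Eventually.of_forall fun _ => by simp [hx]
  dist_le _ _ _ _ _ := by simp [hx]

lemma ae_speed_comp_affine (c : ACWithSpeed X d) {a b : ℝ} (ha : 0 ≤ a) (hab : a < b)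
    (hb : b ≤ 1) :
    ∀ᵐ s ∂(volume.restrict (Ioo (0:ℝ) 1)),
      Tendsto (fun h : ℝ => d (c.toFun ((b - a) * s + a + h)) (c.toFun ((b - a) * s + a)) / |h|)
        (𝓝[≠] 0) (𝓝 (c.speed ((b - a) * s + a))) := by
  have hk : b - a ≠ 0 := (sub_pos.2 hab).ne'
  have hqmp : Measure.QuasiMeasurePreserving (fun s : ℝ => (b - a) * s + a) volume volume :=
    ((measurePreserving_add_right volume a).quasiMeasurePreserving).comp
      (Measure.quasiMeasurePreserving_smul volume hk)
  have h := hqmp.ae ((ae_restrict_iff' measurableSet_Ioo).1 c.speed_ae)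
  rw [ae_restrict_iff' measurableSet_Ioo]
  filter_upwards [h] with s hs hs01
  refine hs ⟨?_, ?_⟩ <;> nlinarith [hs01.1, hs01.2]

noncomputable def restrict (c : ACWithSpeed X d) {a b : ℝ} (ha : 0 ≤ a) (hab : a < b)
    (hb : b ≤ 1) : ACWithSpeed X d where
  toFun s := c.toFun ((b - a) * s + a)
  speed s := (b - a) * c.speed ((b - a) * s + a)
  speed_nonneg s := mul_nonneg (sub_nonneg.2 hab.le) (c.speed_nonneg _)
  integrable := by
    have h := ((c.intervalIntegrable_speed ⟨ha, hab.le.trans hb⟩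
      ⟨ha.trans hab.le, hb⟩).comp_add_right a).comp_mul_left (c := b - a)
    rw [sub_self, zero_div, div_self (sub_pos.2 hab).ne'] at h
    exact h.const_mul (b - a)
  speed_ae := by
    have hk : 0 < b - a := sub_pos.2 hab
    have hscale : Tendsto (fun h : ℝ => (b - a) * h) (𝓝[≠] 0) (𝓝[≠] 0) :=
      tendsto_nhdsWithin_of_tendsto_nhds_of_eventually_within _
        (((continuous_const_mul (b - a)).tendsto' 0 0 (mul_zero _)).mono_left
          nhdsWithin_le_nhds)
        (eventually_nhdsWithin_of_forall fun h hh => mul_ne_zero hk.ne' hh)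
    filter_upwards [c.ae_speed_comp_affine ha hab hb] with s hs
    refine ((hs.comp hscale).const_mul (b - a)).congr fun h => ?_
    simp only [Function.comp_apply, abs_mul, abs_of_pos hk, mul_add, add_right_comm _ _ a]
    rcases eq_or_ne h 0 with rfl | hh
    · simp
    · field_simp
  dist_le u v hu huv hv := by
    have hk : 0 < b - a := sub_pos.2 hab
    have h := intervalIntegral.smul_integral_comp_mul_add (f := c.speed) (a := u) (b := v)
      (b - a) a
    rw [smul_eq_mul] at h
    rw [intervalIntegral.integral_const_mul, h]
    exact c.dist_le _ _ (by nlinarith) (by nlinarith) (by nlinarith)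

lemma wLength_restrict (c : ACWithSpeed X d) (w : X → ℝ) {a b : ℝ} (ha : 0 ≤ a)
    (hab : a < b) (hb : b ≤ 1) :
    wLength d w (c.restrict ha hab hb) = ∫ t in a..b, c.speed t * exp (w (c.toFun t)) := by
  have h := intervalIntegral.smul_integral_comp_mul_add
    (f := fun t => c.speed t * exp (w (c.toFun t))) (a := 0) (b := 1) (b - a) a
  simp only [mul_zero, zero_add, mul_one, sub_add_cancel, smul_eq_mul,
    ← intervalIntegral.integral_const_mul] at h
  simp only [wLength, restrict, mul_assoc, h]

end ACWithSpeed

section ConfDist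

variable {X : Type*} {d : X → X → ℝ} {w : X → ℝ} {x y : X}

lemma wLength_nonneg (w : X → ℝ) (c : ACWithSpeed X d) : 0 ≤ wLength d w c :=
  intervalIntegral.integral_nonneg zero_le_one fun t _ =>
    mul_nonneg (c.speed_nonneg t) (exp_nonneg _)

lemma wLength_zero (c : ACWithSpeed X d) : wLength d (fun _ => 0) c = c.length := by
  simp [wLength, ACWithSpeed.length]

lemma confDist_nonneg (d : X → X → ℝ) (w : X → ℝ) (x y : X) : 0 ≤ confDist d w x y :=
  Real.sInf_nonneg <| by
    rintro L ⟨c, -, -, rfl⟩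
    exact wLength_nonneg w c

lemma confDist_le_wLength (c : ACWithSpeed X d) (h0 : c.toFun 0 = x) (h1 : c.toFun 1 = y) :
    confDist d w x y ≤ wLength d w c := by
  refine csInf_le ?_ ⟨c, h0, h1, rfl⟩
  refine ⟨0, ?_⟩
  rintro L ⟨c, -, -, rfl⟩
  exact wLength_nonneg w c

lemma le_confDist {a : ℝ} (hne : ∃ c : ACWithSpeed X d, c.toFun 0 = x ∧ c.toFun 1 = y)
    (h : ∀ c : ACWithSpeed X d, c.toFun 0 = x → c.toFun 1 = y → a ≤ wLength d w c) :
    a ≤ confDist d w x y := by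
  obtain ⟨c, h0, h1⟩ := hne
  refine le_csInf ⟨_, c, h0, h1, rfl⟩ ?_
  rintro L ⟨c, h0, h1, rfl⟩
  exact h c h0 h1

lemma exists_wLength_lt {b : ℝ} (hne : ∃ c : ACWithSpeed X d, c.toFun 0 = x ∧ c.toFun 1 = y)
    (h : confDist d w x y < b) :
    ∃ c : ACWithSpeed X d, c.toFun 0 = x ∧ c.toFun 1 = y ∧ wLength d w c < b := by
  obtain ⟨c, h0, h1⟩ := hne
  obtain ⟨L, ⟨c, h0, h1, rfl⟩, hL⟩ := exists_lt_of_csInf_lt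
    (s := {L | ∃ c : ACWithSpeed X d, c.toFun 0 = x ∧ c.toFun 1 = y ∧ L = wLength d w c})
    ⟨_, c, h0, h1, rfl⟩ h
  exact ⟨c, h0, h1, hL⟩

lemma exists_curve_of_confDist_ne_zero (h : confDist d w x y ≠ 0) :
    ∃ c : ACWithSpeed X d, c.toFun 0 = x ∧ c.toFun 1 = y := by
  by_contra hne
  refine h ?_
  unfold confDist
  convert Real.sInf_empty using 2
  refine eq_empty_of_forall_notMem ?_
  rintro L ⟨c, h0, h1, -⟩
  exact hne ⟨c, h0, h1⟩

lemma confDist_self (w : X → ℝ) (hx : d x x = 0) : confDist d w x x = 0 :=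
  le_antisymm
    ((confDist_le_wLength (ACWithSpeed.const x hx) rfl rfl).trans_eq (by
      simp [wLength, ACWithSpeed.const]))
    (confDist_nonneg d w x x)

lemma confDist_le_integral (w : X → ℝ) (hd : ∀ x, d x x = 0) (c : ACWithSpeed X d) {a b : ℝ}
    (ha : 0 ≤ a) (hab : a ≤ b) (hb : b ≤ 1) :
    confDist d w (c.toFun a) (c.toFun b) ≤ ∫ t in a..b, c.speed t * exp (w (c.toFun t)) := by
  rcases hab.eq_or_lt with rfl | hlt
  · rw [intervalIntegral.integral_same, confDist_self w (hd _)]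
  · refine (confDist_le_wLength (c.restrict ha hlt hb) ?_ ?_).trans_eq
      (c.wLength_restrict w ha hlt hb) <;> simp [ACWithSpeed.restrict]

end ConfDist

lemma tendsto_of_forall_exp_mul_bounds {α : Type*} {l : Filter α} {u v : α → ℝ} {s : ℝ}
    (hu : Tendsto u l (𝓝 s))
    (h : ∀ ε > 0, ∀ᶠ x in l, exp (-ε) * u x ≤ v x ∧ v x ≤ exp ε * u x) :
    Tendsto v l (𝓝 s) := by
  have hscale (σ : ℝ) : Tendsto (fun ε => exp (σ * ε) * s) (𝓝[>] 0) (𝓝 s) := by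
    have : Continuous fun ε : ℝ => exp (σ * ε) * s := by fun_prop
    simpa using (this.tendsto 0).mono_left nhdsWithin_le_nhds
  rw [tendsto_order]
  refine ⟨fun a ha => ?_, fun b hb => ?_⟩
  · obtain ⟨ε, haε, hε⟩ :=
      (((hscale (-1)).eventually (lt_mem_nhds ha)).and self_mem_nhdsWithin).exists
    filter_upwards [(hu.const_mul _).eventually (lt_mem_nhds haε), h ε hε] with x hx hxv
    simp only [neg_one_mul] at hx
    exact hx.trans_le hxv.1
  · obtain ⟨ε, hbε, hε⟩ :=
      (((hscale 1).eventually (gt_mem_nhds hb)).and self_mem_nhdsWithin).exists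
    filter_upwards [(hu.const_mul _).eventually (gt_mem_nhds hbε), h ε hε] with x hx hxv
    simp only [one_mul] at hx
    exact hxv.2.trans_lt hx

lemma dist_le_integral_of_forall_dist_le {X : Type*} [PseudoMetricSpace X] {f : ℝ → X}
    {g : ℝ → ℝ} (hg : IntervalIntegrable g volume 0 1) {δ : ℝ} (hδ : 0 < δ)
    (h : ∀ a b, 0 ≤ a → a ≤ b → b ≤ 1 → b - a < δ →
      dist (f a) (f b) ≤ ∫ t in a..b, g t) :
    dist (f 0) (f 1) ≤ ∫ t in (0:ℝ)..1, g t := by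
  obtain ⟨n, hn⟩ := exists_nat_one_div_lt hδ
  have hN : (0:ℝ) < n + 1 := by positivity
  set a : ℕ → ℝ := fun i => i / (n + 1)
  have ha : ∀ i ≤ n + 1, a i ∈ Icc (0:ℝ) 1 := fun i hi =>
    ⟨by positivity, div_le_one_of_le₀ (by exact_mod_cast hi) hN.le⟩
  have hstep : ∀ i, a (i + 1) - a i = 1 / (n + 1) := fun i => by
    simp only [a]; push_cast; ring
  have hmono : ∀ i, a i ≤ a (i + 1) := fun i => by
    simp only [a]
    gcongr
    simp
  have hint : ∀ i < n + 1, IntervalIntegrable g volume (a i) (a (i + 1)) := fun i hi =>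
    hg.mono_set (by
      rw [uIcc_of_le zero_le_one]
      exact uIcc_subset_Icc (ha i hi.le) (ha (i + 1) hi))
  have ha0 : a 0 = 0 := by simp [a]
  have haN : a (n + 1) = 1 := by simp only [a]; push_cast; exact div_self hN.ne'
  calc dist (f 0) (f 1) = dist (f (a 0)) (f (a (n + 1))) := by rw [ha0, haN]
    _ ≤ ∑ i ∈ Finset.range (n + 1), dist (f (a i)) (f (a (i + 1))) :=
        dist_le_range_sum_dist (fun i => f (a i)) (n + 1)
    _ ≤ ∑ i ∈ Finset.range (n + 1), ∫ t in a i..a (i + 1), g t := by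
        refine Finset.sum_le_sum fun i hi => ?_
        have hi := Finset.mem_range.1 hi
        exact h _ _ (ha i hi.le).1 (hmono i) (ha (i + 1) hi).2
          (by rw [hstep]; exact hn)
    _ = ∫ t in (0:ℝ)..1, g t := by
        rw [intervalIntegral.sum_integral_adjacent_intervals hint, ha0, haN]

section PseudoMetric

variable {X : Type*} [PseudoMetricSpace X] {w : X → ℝ}

lemma exp_mul_length_le_wLength (hw : Continuous w) (c : ACWithSpeed X (fun p q => dist p q))
    {a : ℝ} (h : ∀ t ∈ Icc (0:ℝ) 1, a ≤ w (c.toFun t)) :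
    exp a * c.length ≤ wLength (fun p q => dist p q) w c := by
  rw [ACWithSpeed.length, ← intervalIntegral.integral_const_mul]
  refine intervalIntegral.integral_mono_on zero_le_one (c.integrable.const_mul _)
    (c.intervalIntegrable_speed_mul_exp c.continuousOn_dist hw (left_mem_Icc.2 zero_le_one)
      (right_mem_Icc.2 zero_le_one)) fun t ht => ?_
  rw [mul_comm]
  exact mul_le_mul_of_nonneg_left (exp_le_exp.2 (h t ht)) (c.speed_nonneg t)

lemma wLength_le_exp_mul_length (hw : Continuous w) (c : ACWithSpeed X (fun p q => dist p q))
    {b : ℝ} (h : ∀ t ∈ Icc (0:ℝ) 1, w (c.toFun t) ≤ b) :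
    wLength (fun p q => dist p q) w c ≤ exp b * c.length := by
  rw [ACWithSpeed.length, ← intervalIntegral.integral_const_mul]
  refine intervalIntegral.integral_mono_on zero_le_one
    (c.intervalIntegrable_speed_mul_exp c.continuousOn_dist hw (left_mem_Icc.2 zero_le_one)
      (right_mem_Icc.2 zero_le_one)) (c.integrable.const_mul _) fun t ht => ?_
  rw [mul_comm (exp b)]
  exact mul_le_mul_of_nonneg_left (exp_le_exp.2 (h t ht)) (c.speed_nonneg t)

end PseudoMetric

section LengthSpace

variable {X : Type*} [MetricSpace X] {w : X → ℝ} {m M : ℝ}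

lemma exists_curve_of_ne (hlen : ∀ a b : X, dist a b = lengthDist (fun p q => dist p q) a b)
    {x y : X} (hxy : x ≠ y) :
    ∃ c : ACWithSpeed X (fun p q => dist p q), c.toFun 0 = x ∧ c.toFun 1 = y :=
  exists_curve_of_confDist_ne_zero (w := fun _ => 0) ((hlen x y).symm.trans_ne (dist_ne_zero.2 hxy))

lemma exp_mul_dist_le_confDist (hlen : ∀ a b : X, dist a b = lengthDist (fun p q => dist p q) a b)
    (hw : Continuous w) (hm : ∀ x, m ≤ w x) (x y : X) :
    exp m * dist x y ≤ confDist (fun p q => dist p q) w x y := by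
  rcases eq_or_ne x y with rfl | hxy
  · simpa using confDist_nonneg _ w x x
  refine le_confDist (exists_curve_of_ne hlen hxy) fun c h0 h1 => ?_
  calc exp m * dist x y ≤ exp m * c.length := by
        gcongr
        simpa [h0, h1] using c.le_length_zero_one
    _ ≤ _ := exp_mul_length_le_wLength hw c fun t _ => hm _

lemma confDist_le_exp_mul_dist
    (hlen : ∀ a b : X, dist a b = lengthDist (fun p q => dist p q) a b) (hw : Continuous w)
    {z p : X} {r b : ℝ} (hball : ∀ x, dist x z < r → w x ≤ b) (hp : dist p z < r) :
    confDist (fun p q => dist p q) w p z ≤ exp b * dist p z := by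
  rcases eq_or_ne p z with rfl | hpz
  · rw [confDist_self w (dist_self p), dist_self, mul_zero]
  refine le_of_forall_pos_le_add fun η hη => ?_
  set δ := min (r - dist p z) (η / exp b)
  have hδ : 0 < δ := lt_min (sub_pos.2 hp) (by positivity)
  obtain ⟨c, h0, h1, hc⟩ := exists_wLength_lt (w := fun _ => 0) (exists_curve_of_ne hlen hpz)
    ((hlen p z).symm.trans_lt (lt_add_of_pos_right _ hδ))
  rw [wLength_zero] at hc
  have hstay : ∀ t ∈ Icc (0:ℝ) 1, dist (c.toFun t) z < r := fun t ht => by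
    have := c.le_length ht
    rw [h1] at this
    linarith [min_le_left (r - dist p z) (η / exp b)]
  calc confDist (fun p q => dist p q) w p z ≤ wLength (fun p q => dist p q) w c :=
        confDist_le_wLength c h0 h1
    _ ≤ exp b * c.length := wLength_le_exp_mul_length hw c fun t ht => hball _ (hstay t ht)
    _ ≤ exp b * (dist p z + η / exp b) := by
        gcongr
        linarith [min_le_right (r - dist p z) (η / exp b)]
    _ = exp b * dist p z + η := by field_simp

lemma min_le_confDist (hlen : ∀ a b : X, dist a b = lengthDist (fun p q => dist p q) a b)
    (hw : Continuous w) (hm : ∀ x, m ≤ w x) {z : X} {r a : ℝ}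
    (hball : ∀ x, dist x z < r → a ≤ w x) (p : X) :
    min (exp a * dist p z) (exp m * r) ≤ confDist (fun p q => dist p q) w p z := by
  rcases eq_or_ne p z with rfl | hpz
  · rw [dist_self, mul_zero]
    exact (min_le_left _ _).trans (confDist_nonneg _ _ _ _)
  refine le_confDist (exists_curve_of_ne hlen hpz) fun c h0 h1 => ?_
  by_cases hstay : ∀ t ∈ Icc (0:ℝ) 1, dist (c.toFun t) z < r
  · calc min (exp a * dist p z) (exp m * r) ≤ exp a * dist p z := min_le_left _ _
      _ ≤ exp a * c.length := by
          gcongr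
          simpa [h0, h1] using c.le_length_zero_one
      _ ≤ _ := exp_mul_length_le_wLength hw c fun t ht => hball _ (hstay t ht)
  · push Not at hstay
    obtain ⟨s, hs, hrs⟩ := hstay
    calc min (exp a * dist p z) (exp m * r) ≤ exp m * r := min_le_right _ _
      _ ≤ exp m * c.length := by
          gcongr
          have := c.le_length hs
          rw [h1] at this
          exact hrs.trans this
      _ ≤ _ := exp_mul_length_le_wLength hw c fun t _ => hm _

lemma tendsto_confDist_div_abs
    (hlen : ∀ a b : X, dist a b = lengthDist (fun p q => dist p q) a b) (hw : Continuous w)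
    (hm : ∀ x, m ≤ w x) {f : ℝ → X} {t s : ℝ}
    (hs : Tendsto (fun h : ℝ => dist (f (t + h)) (f t) / |h|) (𝓝[≠] 0) (𝓝 s)) :
    Tendsto (fun h : ℝ => confDist (fun p q => dist p q) w (f (t + h)) (f t) / |h|) (𝓝[≠] 0)
      (𝓝 (s * exp (w (f t)))) := by
  have hdist : Tendsto (fun h : ℝ => dist (f (t + h)) (f t)) (𝓝[≠] 0) (𝓝 0) := by
    have habs : Tendsto (fun h : ℝ => |h|) (𝓝[≠] 0) (𝓝 0) :=
      (continuous_abs.tendsto' 0 0 abs_zero).mono_left nhdsWithin_le_nhds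
    have hmul := hs.mul habs
    rw [mul_zero] at hmul
    refine hmul.congr' ?_
    filter_upwards [self_mem_nhdsWithin] with h hh
    exact div_mul_cancel₀ _ (abs_ne_zero.2 hh)
  refine tendsto_of_forall_exp_mul_bounds (hs.mul_const _) fun ε hε => ?_
  obtain ⟨r, hr, hball⟩ := Metric.continuous_iff.1 hw (f t) ε hε
  have hnear : ∀ᶠ h in 𝓝[≠] 0,
      dist (f (t + h)) (f t) < r ∧ exp (w (f t) - ε) * dist (f (t + h)) (f t) < exp m * r :=
    (hdist.eventually (gt_mem_nhds hr)).and
      ((hdist.const_mul _).eventually (gt_mem_nhds (by rw [mul_zero]; positivity)))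
  filter_upwards [hnear] with h ⟨hclose, hsmall⟩
  constructor
  · have hlow := min_le_confDist hlen hw hm (r := r) (a := w (f t) - ε)
      (fun x hx => by linarith [abs_lt.1 (hball x hx)]) (f (t + h))
    rw [min_eq_left hsmall.le] at hlow
    calc exp (-ε) * (dist (f (t + h)) (f t) / |h| * exp (w (f t)))
        = exp (w (f t) - ε) * dist (f (t + h)) (f t) / |h| := by
          rw [sub_eq_add_neg, exp_add]; ring
      _ ≤ _ := by gcongr
  · have hup := confDist_le_exp_mul_dist hlen hw (b := w (f t) + ε)
      (fun x hx => by linarith [abs_lt.1 (hball x hx)]) hclose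
    calc confDist (fun p q => dist p q) w (f (t + h)) (f t) / |h|
        ≤ exp (w (f t) + ε) * dist (f (t + h)) (f t) / |h| := by gcongr
      _ = exp ε * (dist (f (t + h)) (f t) / |h| * exp (w (f t))) := by rw [exp_add]; ring

noncomputable def ACWithSpeed.conformal
    (hlen : ∀ a b : X, dist a b = lengthDist (fun p q => dist p q) a b) (hw : Continuous w)
    (hm : ∀ x, m ≤ w x) (c : ACWithSpeed X (fun p q => dist p q)) :
    ACWithSpeed X (confDist (fun p q => dist p q) w) where
  toFun := c.toFun
  speed t := c.speed t * exp (w (c.toFun t))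
  speed_nonneg t := mul_nonneg (c.speed_nonneg t) (exp_nonneg _)
  integrable := c.intervalIntegrable_speed_mul_exp c.continuousOn_dist hw
    (left_mem_Icc.2 zero_le_one) (right_mem_Icc.2 zero_le_one)
  speed_ae := c.speed_ae.mono fun _ ht => tendsto_confDist_div_abs hlen hw hm ht
  dist_le _ _ ha hab hb := confDist_le_integral w dist_self c ha hab hb

lemma wLength_conformal
    (hlen : ∀ a b : X, dist a b = lengthDist (fun p q => dist p q) a b) (hw : Continuous w)
    (hm : ∀ x, m ≤ w x) (c : ACWithSpeed X (fun p q => dist p q)) :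
    wLength (confDist (fun p q => dist p q) w) (fun p => -w p) (c.conformal hlen hw hm)
      = c.length := by
  simp only [wLength, ACWithSpeed.conformal, ACWithSpeed.length, mul_assoc, ← exp_add,
    add_neg_cancel, exp_zero, mul_one]

lemma exists_pos_forall_dist_le_exp_mul_confDist
    (hlen : ∀ a b : X, dist a b = lengthDist (fun p q => dist p q) a b) (hw : Continuous w)
    (hm : ∀ x, m ≤ w x) (hM : ∀ x, w x ≤ M) {K : Set X} (hK : IsCompact K) {ε : ℝ}
    (hε : 0 < ε) :
    ∃ δ > 0, ∀ z ∈ K, ∀ x, dist x z < δ →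
      |w x - w z| < ε ∧ dist x z ≤ exp (ε - w z) * confDist (fun p q => dist p q) w x z := by
  obtain ⟨r, hr, hunif⟩ := Metric.mem_uniformity_dist.1 <|
    hK.uniformContinuousAt_of_continuousAt w (fun _ _ => hw.continuousAt)
      (Metric.dist_mem_uniformity hε)
  have hball : ∀ z ∈ K, ∀ x, dist x z < r → |w x - w z| < ε := fun z hz x hx => by
    simpa [abs_sub_comm, Real.dist_eq] using hunif (a := z) (b := x) (by rwa [dist_comm]) hz
  -- `δ ≤ e^{m - M} r` makes the first alternative of `min_le_confDist` the smaller one.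
  refine ⟨min r (exp (m - M) * r), by positivity, fun z hz x hx => ⟨hball z hz x
    (hx.trans_le (min_le_left _ _)), ?_⟩⟩
  have hlow := min_le_confDist hlen hw hm (a := w z - ε)
    (fun y hy => by linarith [abs_lt.1 (hball z hz y hy)]) x
  have hsmall : exp (w z - ε) * dist x z ≤ exp m * r :=
    calc exp (w z - ε) * dist x z ≤ exp M * (exp (m - M) * r) := by
          gcongr
          · linarith [hM z]
          · exact hx.le.trans (min_le_right _ _)
      _ = exp m * r := by rw [← mul_assoc, ← exp_add, add_sub_cancel]
  rw [min_eq_left hsmall] at hlow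
  calc dist x z = exp (ε - w z) * (exp (w z - ε) * dist x z) := by
        rw [← mul_assoc, ← exp_add]; simp
    _ ≤ _ := by gcongr

lemma continuousOn_of_confDist
    (hlen : ∀ a b : X, dist a b = lengthDist (fun p q => dist p q) a b) (hw : Continuous w)
    (hm : ∀ x, m ≤ w x) (c : ACWithSpeed X (confDist (fun p q => dist p q) w)) :
    ContinuousOn c.toFun (Icc 0 1) :=
  c.continuousOn (exp_nonneg (-m)) fun p q => by
    rw [← one_mul (dist p q), ← exp_zero, ← neg_add_cancel m, exp_add, mul_assoc]
    exact mul_le_mul_of_nonneg_left (exp_mul_dist_le_confDist hlen hw hm p q) (exp_nonneg _)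

lemma dist_le_exp_mul_wLength_neg
    (hlen : ∀ a b : X, dist a b = lengthDist (fun p q => dist p q) a b) (hw : Continuous w)
    (hm : ∀ x, m ≤ w x) (hM : ∀ x, w x ≤ M)
    (c : ACWithSpeed X (confDist (fun p q => dist p q) w)) {ε : ℝ} (hε : 0 < ε) :
    dist (c.toFun 0) (c.toFun 1)
      ≤ exp (2 * ε) * wLength (confDist (fun p q => dist p q) w) (fun p => -w p) c := by
  have hc := continuousOn_of_confDist hlen hw hm c
  obtain ⟨δ, hδ, hK⟩ := exists_pos_forall_dist_le_exp_mul_confDist hlen hw hm hM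
    (isCompact_Icc.image_of_continuousOn hc) hε
  obtain ⟨δ', hδ', hcδ⟩ := Metric.uniformContinuousOn_iff.1
    (isCompact_Icc.uniformContinuousOn_of_continuous hc) δ hδ
  rw [wLength, ← intervalIntegral.integral_const_mul]
  refine dist_le_integral_of_forall_dist_le ((c.intervalIntegrable_speed_mul_exp hc hw.neg
    (left_mem_Icc.2 zero_le_one) (right_mem_Icc.2 zero_le_one)).const_mul _) hδ'
    fun a b ha hab hb hba => ?_
  have hsub : Icc a b ⊆ Icc 0 1 := Icc_subset_Icc ha hb
  have hbK : c.toFun b ∈ c.toFun '' Icc 0 1 := mem_image_of_mem _ (hsub ⟨hab, le_rfl⟩)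
  have hnear : ∀ t ∈ Icc a b, dist (c.toFun t) (c.toFun b) < δ := fun t ht =>
    hcδ t (hsub ht) b (hsub ⟨hab, le_rfl⟩) (by
      rw [Real.dist_eq, abs_sub_comm, abs_of_nonneg (by linarith [ht.2])]
      linarith [ht.1])
  calc dist (c.toFun a) (c.toFun b)
      ≤ exp (ε - w (c.toFun b)) * confDist (fun p q => dist p q) w (c.toFun a) (c.toFun b) :=
        (hK _ hbK _ (hnear a ⟨le_rfl, hab⟩)).2
    _ ≤ exp (ε - w (c.toFun b)) * ∫ t in a..b, c.speed t := by
        gcongr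
        exact c.dist_le a b ha hab hb
    _ = ∫ t in a..b, exp (ε - w (c.toFun b)) * c.speed t :=
        (intervalIntegral.integral_const_mul _ _).symm
    _ ≤ ∫ t in a..b, exp (2 * ε) * (c.speed t * exp (-w (c.toFun t))) := by
        refine intervalIntegral.integral_mono_on hab
          ((c.intervalIntegrable_speed ⟨ha, hab.trans hb⟩ ⟨ha.trans hab, hb⟩).const_mul _)
          ((c.intervalIntegrable_speed_mul_exp hc hw.neg ⟨ha, hab.trans hb⟩
            ⟨ha.trans hab, hb⟩).const_mul _) fun t ht => ?_
        have hwt := abs_lt.1 (hK _ hbK _ (hnear t ht)).1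
        calc exp (ε - w (c.toFun b)) * c.speed t ≤ exp (2 * ε - w (c.toFun t)) * c.speed t :=
              mul_le_mul_of_nonneg_right (exp_le_exp.2 (by linarith)) (c.speed_nonneg t)
          _ = exp (2 * ε) * (c.speed t * exp (-w (c.toFun t))) := by
              rw [sub_eq_add_neg, exp_add]; ring

lemma dist_le_wLength_neg
    (hlen : ∀ a b : X, dist a b = lengthDist (fun p q => dist p q) a b) (hw : Continuous w)
    (hm : ∀ x, m ≤ w x) (hM : ∀ x, w x ≤ M)
    (c : ACWithSpeed X (confDist (fun p q => dist p q) w)) :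
    dist (c.toFun 0) (c.toFun 1)
      ≤ wLength (confDist (fun p q => dist p q) w) (fun p => -w p) c := by
  set L := wLength (confDist (fun p q => dist p q) w) (fun p => -w p) c
  have hlim : Tendsto (fun ε : ℝ => exp (2 * ε) * L) (𝓝[>] 0) (𝓝 L) := by
    have : Continuous fun ε : ℝ => exp (2 * ε) * L := by fun_prop
    simpa using (this.tendsto 0).mono_left nhdsWithin_le_nhds
  exact ge_of_tendsto hlim (eventually_nhdsWithin_of_forall fun ε hε =>
    dist_le_exp_mul_wLength_neg hlen hw hm hM c hε)

lemma confDist_conformal_le_dist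
    (hlen : ∀ a b : X, dist a b = lengthDist (fun p q => dist p q) a b) (hw : Continuous w)
    (hm : ∀ x, m ≤ w x) (x y : X) :
    confDist (confDist (fun p q => dist p q) w) (fun p => -w p) x y ≤ dist x y := by
  rcases eq_or_ne x y with rfl | hxy
  · rw [confDist_self _ (confDist_self w (dist_self x)), dist_self]
  rw [hlen x y]
  refine le_confDist (exists_curve_of_ne hlen hxy) fun c h0 h1 => ?_
  rw [wLength_zero, ← wLength_conformal hlen hw hm c]
  exact confDist_le_wLength _ h0 h1

lemma dist_le_confDist_conformal
    (hlen : ∀ a b : X, dist a b = lengthDist (fun p q => dist p q) a b) (hw : Continuous w)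
    (hm : ∀ x, m ≤ w x) (hM : ∀ x, w x ≤ M) (x y : X) :
    dist x y ≤ confDist (confDist (fun p q => dist p q) w) (fun p => -w p) x y := by
  rcases eq_or_ne x y with rfl | hxy
  · rw [dist_self]
    exact confDist_nonneg _ _ _ _
  obtain ⟨c, h0, h1⟩ := exists_curve_of_ne hlen hxy
  refine le_confDist ⟨c.conformal hlen hw hm, h0, h1⟩ fun c' h0' h1' => ?_
  rw [← h0', ← h1']
  exact dist_le_wLength_neg hlen hw hm hM c'

end LengthSpace

theorem stmt5 {X : Type*} [MetricSpace X]
    (hlen : ∀ a b : X, dist a b = lengthDist (fun p q => dist p q) a b)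
    (w : X → ℝ) (hw : Continuous w) (hb : ∃ m M : ℝ, ∀ x, m ≤ w x ∧ w x ≤ M) :
    ∀ x y : X,
      confDist (confDist (fun p q => dist p q) w) (fun p => -w p) x y
        = lengthDist (fun p q => dist p q) x y := by
  obtain ⟨m, M, hmM⟩ := hb
  intro x y
  rw [← hlen x y]
  exact le_antisymm (confDist_conformal_le_dist hlen hw (fun x => (hmM x).1) x y)
    (dist_le_confDist_conformal hlen hw (fun x => (hmM x).1) (fun x => (hmM x).2) x y)
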